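/- arXiv:2208.02340 — 7 statements merged into one kernel-verified Lean document; each statement's English description precedes it below -/
import Mathlib

section
/- If G is a connected claw-free graph of order n (i.e., G contains no induced subgraph isomorphic to the star K_{1,3}), then the outer-independent 2-rainbow domination number of G satisfies γ_oir2(G) ≥ n/2. -/
/-- `f` is an outer-independent 2-rainbow dominating function of `G`:
every vertex assigned `∅` sees both colors among its neighbors, and the
set of vertices assigned `∅` is independent. -/
def IsOI2RD {V : Type*} (G : SimpleGraph V) (f : V → Finset (Fin 2)) : Prop :=
  (∀ v, f v = ∅ → ∀ c : Fin 2, ∃ u, G.Adj v u ∧ c ∈ f u) ∧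
  (∀ u w, f u = ∅ → f w = ∅ → ¬ G.Adj u w)

/-- The outer-independent 2-rainbow domination number of `G`. -/
noncomputable def oir2 {V : Type*} [Fintype V] (G : SimpleGraph V) : ℕ :=
  sInf {w | ∃ f : V → Finset (Fin 2), IsOI2RD G f ∧ w = ∑ v, (f v).card}

/-- `G` is claw-free: it has no induced subgraph isomorphic to `K_{1,3}`. -/
def ClawFree {V : Type*} (G : SimpleGraph V) : Prop :=
  ¬ ∃ a b c d : V, b ≠ c ∧ b ≠ d ∧ c ≠ d ∧ G.Adj a b ∧ G.Adj a c ∧ G.Adj a d ∧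
      ¬ G.Adj b c ∧ ¬ G.Adj b d ∧ ¬ G.Adj c d

lemma key_count {V : Type*} [Fintype V] (G : SimpleGraph V) (hclaw : ClawFree G)
    {f : V → Finset (Fin 2)} (hf : IsOI2RD G f) :
    Fintype.card V ≤ 2 * ∑ v, (f v).card := by
  classical
  obtain ⟨hdom, hind⟩ := hf
  set w : ℕ := ∑ v, (f v).card with hw
  set V0 : Finset V := Finset.univ.filter (fun v => f v = ∅) with hV0
  set V1 : Finset V := Finset.univ.filter (fun v => ¬ f v = ∅) with hV1
  have hsplit : V0.card + V1.card = Fintype.card V := by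
    simpa using Finset.card_filter_add_card_filter_not
      (s := (Finset.univ : Finset V)) (fun v => f v = ∅)
  -- V1.card ≤ w
  have hV1w : V1.card ≤ w := by
    calc V1.card = ∑ v ∈ V1, 1 := by simp
    _ ≤ ∑ v ∈ V1, (f v).card := by
        refine Finset.sum_le_sum fun v hv => ?_
        have : f v ≠ ∅ := (Finset.mem_filter.mp hv).2
        exact Finset.card_pos.mpr (Finset.nonempty_iff_ne_empty.mpr this)
    _ ≤ w := Finset.sum_le_sum_of_subset (Finset.subset_univ V1)
  -- color classes
  set U : Fin 2 → Finset V := fun c => Finset.univ.filter (fun v => c ∈ f v) with hU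
  have hwU : w = (U 0).card + (U 1).card := by
    have h1 : ∀ v, (f v).card = ∑ c : Fin 2, (if c ∈ f v then 1 else 0) := by
      intro v
      rw [← Finset.card_filter]
      congr 1
      ext c
      simp
    calc w = ∑ v, ∑ c : Fin 2, (if c ∈ f v then 1 else 0) := by
            rw [hw]; exact Finset.sum_congr rfl fun v _ => h1 v
    _ = ∑ c : Fin 2, ∑ v, (if c ∈ f v then 1 else 0) := Finset.sum_comm
    _ = ∑ c : Fin 2, (U c).card := by
        refine Finset.sum_congr rfl fun c _ => ?_
        simp only [hU]; exact (Finset.card_filter _ _).symm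
    _ = (U 0).card + (U 1).card := by rw [Fin.sum_univ_two]
  -- choice of rainbow neighbors
  have hgex : ∀ v c, ∃ u, f v = ∅ → G.Adj v u ∧ c ∈ f u := by
    intro v c
    by_cases h : f v = ∅
    · obtain ⟨u, hu⟩ := hdom v h c
      exact ⟨u, fun _ => hu⟩
    · exact ⟨v, fun h' => absurd h' h⟩
  choose g hg using hgex
  -- each vertex has at most 2 neighbors in V0
  have hnbr : ∀ u : V, (Finset.univ.filter (fun v => f v = ∅ ∧ G.Adj u v)).card ≤ 2 := by
    intro u
    by_contra h
    push_neg at h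
    obtain ⟨b, c, d, hb, hc, hd, hbc, hbd, hcd⟩ := Finset.two_lt_card_iff.mp h
    simp only [Finset.mem_filter, Finset.mem_univ, true_and] at hb hc hd
    exact hclaw ⟨u, b, c, d, hbc, hbd, hcd, hb.2, hc.2, hd.2,
      hind b c hb.1 hc.1, hind b d hb.1 hd.1, hind c d hc.1 hd.1⟩
  -- |V0| ≤ 2 |U c| for each color
  have hV0c : ∀ c : Fin 2, V0.card ≤ 2 * (U c).card := by
    intro c
    have hmaps : ∀ v ∈ V0, g v c ∈ U c := by
      intro v hv
      have hv' : f v = ∅ := (Finset.mem_filter.mp hv).2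
      simp only [hU, Finset.mem_filter, Finset.mem_univ, true_and]
      exact (hg v c hv').2
    refine Finset.card_le_mul_card_image_of_maps_to hmaps 2 fun u hu => ?_
    refine le_trans (Finset.card_le_card ?_) (hnbr u)
    intro v hv
    simp only [Finset.mem_filter, hV0, Finset.mem_univ, true_and] at hv ⊢
    obtain ⟨hv0, hvg⟩ := hv
    exact ⟨hv0, hvg ▸ ((hg v c hv0).1).symm⟩
  -- |V0| ≤ w
  have hV0w : V0.card ≤ w := by
    have h0 := hV0c 0
    have h1 := hV0c 1
    omega
  omega

theorem oir2_ge_half_order_of_connected_clawfree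
    {V : Type*} [Fintype V] (G : SimpleGraph V)
    (hconn : G.Connected) (hclaw : ClawFree G) :
    (Fintype.card V : ℝ) / 2 ≤ (oir2 G : ℝ) := by
  classical
  have hne : {w | ∃ f : V → Finset (Fin 2), IsOI2RD G f ∧ w = ∑ v, (f v).card}.Nonempty := by
    refine ⟨∑ v : V, (Finset.univ : Finset (Fin 2)).card, fun _ => Finset.univ, ⟨?_, ?_⟩, rfl⟩
    · intro v hv
      exact absurd hv Finset.univ_nonempty.ne_empty
    · intro u w hu
      exact absurd hu Finset.univ_nonempty.ne_empty
  have hmem := Nat.sInf_mem hne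
  obtain ⟨f, hf, hfe⟩ := hmem
  have hkey : Fintype.card V ≤ 2 * oir2 G := by
    rw [oir2, hfe]
    exact key_count G hclaw hf
  rw [div_le_iff₀ (by norm_num : (0:ℝ) < 2)]
  have : (Fintype.card V : ℝ) ≤ 2 * (oir2 G : ℝ) := by exact_mod_cast hkey
  linarith
end

section
/- Let G be a connected claw-free graph of order n with γ_oir2(G) = n/2, and let f be any OI2RD function of G of weight n/2, with V_∅, V_{1}, V_{2}, V_{12} denoting the sets of vertices assigned ∅, {1}, {2}, {1,2} respectively. Then: (i) V_{12} = ∅; (ii) every vertex in V_∅ has exactly one neighbor in V_{1} and exactly one neighbor in V_{2}; (iii) every vertex in V_{1} ∪ V_{2} has exactly two neighbors in V_∅; and (iv) the subgraph of G induced by V_{1} ∪ V_{2} has maximum degree at most 2. -/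
/-!
Let `A = V_∅`. Since `A` is independent, claw-freeness lets every vertex see at most two
vertices of `A`, while rainbow domination gives every vertex of `A` a neighbourhood of weight
at least `2`. Double counting the pairs (vertex of `A`, coloured neighbour) yields
`2|A| ≤ ∑_{v ∈ A} w(N v) = ∑_u |f u| · |N u ∩ A| ≤ 2 w(f)`, and `n - |A| ≤ w(f)` because every
vertex outside `A` has weight at least `1`. If `w(f) = n/2`, all these estimates are equalities,
vertex by vertex: every label has size at most `1`, every vertex of `A` has degree `2`, and
every coloured vertex has exactly two neighbours in `A`. For (iv), claw-freeness at a coloured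
vertex `u` with its two neighbours `a, b ∈ A` forces each coloured neighbour of `u` to be the
second neighbour of `a` or of `b`.
-/

open Finset

section

variable {V α β : Type*} {G : SimpleGraph V} {f : V → Finset (Fin 2)}

namespace Finset

theorem ite_ne_empty_le_card [DecidableEq β] (t : Finset β) :
    (if t ≠ ∅ then 1 else 0) ≤ #t := by
  split_ifs with h
  · exact card_pos.mpr (nonempty_iff_ne_empty.mpr h)
  · exact Nat.zero_le _

theorem card_filter_ne_empty_le_sum_card [DecidableEq β] (s : Finset α) (t : α → Finset β) :
    #{a ∈ s | t a ≠ ∅} ≤ ∑ a ∈ s, #(t a) := by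
  rw [card_eq_sum_ones, sum_filter]
  exact sum_le_sum fun a _ => ite_ne_empty_le_card (t a)

theorem card_le_one_of_sum_card_le_card_filter_ne_empty [DecidableEq β] {s : Finset α}
    {t : α → Finset β} (h : ∑ a ∈ s, #(t a) ≤ #{a ∈ s | t a ≠ ∅}) {a : α} (ha : a ∈ s) :
    #(t a) ≤ 1 := by
  have hle : ∀ a ∈ s, (if t a ≠ ∅ then 1 else 0) ≤ #(t a) := fun a _ => ite_ne_empty_le_card (t a)
  rw [card_eq_sum_ones, sum_filter] at h
  have := (sum_eq_sum_iff_of_le hle).mp (le_antisymm (sum_le_sum hle) h) a ha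
  split_ifs at this <;> omega

end Finset

theorem SimpleGraph.sum_sum_neighborFinset [Fintype V] [DecidableRel G.Adj] {M : Type*}
    [AddCommMonoid M] (s : Finset V) (g : V → M) :
    ∑ v ∈ s, ∑ u ∈ G.neighborFinset v, g u = ∑ u, #{x ∈ s | G.Adj u x} • g u := by
  simp_rw [SimpleGraph.neighborFinset_eq_filter, sum_filter]
  rw [sum_comm]
  refine sum_congr rfl fun u _ => ?_
  rw [← sum_filter, sum_const]
  simp_rw [G.adj_comm]

theorem ClawFree.adj_or_adj (hG : ClawFree G) {v a b c : V} (ha : G.Adj v a) (hb : G.Adj v b)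
    (hc : G.Adj v c) (hab : a ≠ b) (hac : a ≠ c) (hbc : b ≠ c) (hnab : ¬ G.Adj a b) :
    G.Adj a c ∨ G.Adj b c := by
  by_contra! h
  exact hG ⟨v, a, b, c, hab, hac, hbc, ha, hb, hc, hnab, h.1, h.2⟩

theorem ClawFree.card_filter_adj_le_two [DecidableRel G.Adj] (hG : ClawFree G) {s : Finset V}
    (hs : G.IsIndepSet s) (v : V) : #{x ∈ s | G.Adj v x} ≤ 2 := by
  classical
  by_contra! h
  obtain ⟨t, hts, ht⟩ := exists_subset_card_eq (show 3 ≤ #{x ∈ s | G.Adj v x} by omega)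
  obtain ⟨a, b, c, hab, hac, hbc, rfl⟩ := card_eq_three.mp ht
  simp only [insert_subset_iff, singleton_subset_iff, mem_filter] at hts
  obtain ⟨⟨has, hva⟩, ⟨hbs, hvb⟩, ⟨hcs, hvc⟩⟩ := hts
  rcases hG.adj_or_adj hva hvb hvc hab hac hbc (hs has hbs hab) with h | h
  · exact hs has hcs hac h
  · exact hs hbs hcs hbc h

namespace IsOI2RD

theorem isIndepSet_empty (hf : IsOI2RD G f) : G.IsIndepSet {v | f v = ∅} :=
  fun u hu w hw _ => hf.2 u w hu hw

theorem ne_empty_of_adj (hf : IsOI2RD G f) {v u : V} (hv : f v = ∅) (h : G.Adj v u) :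
    f u ≠ ∅ :=
  fun hu => hf.2 v u hv hu h

variable [Fintype V] [DecidableRel G.Adj]

theorem two_le_sum_card_neighborFinset (hf : IsOI2RD G f) {v : V} (hv : f v = ∅) :
    2 ≤ ∑ u ∈ G.neighborFinset v, #(f u) := by
  have hcover : (G.neighborFinset v).biUnion f = univ := by
    refine eq_univ_of_forall fun c => ?_
    obtain ⟨u, hvu, hc⟩ := hf.1 v hv c
    exact mem_biUnion.mpr ⟨u, (G.mem_neighborFinset v u).mpr hvu, hc⟩
  calc 2 = #((G.neighborFinset v).biUnion f) := by rw [hcover, card_univ, Fintype.card_fin]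
    _ ≤ _ := card_biUnion_le

theorem card_filter_empty_adj_le_two (hclaw : ClawFree G) (hf : IsOI2RD G f) (u : V) :
    #{x | f x = ∅ ∧ G.Adj u x} ≤ 2 := by
  have hA : G.IsIndepSet (({v | f v = ∅} : Finset V) : Set V) := by
    rw [coe_filter_univ]; exact hf.isIndepSet_empty
  simpa only [filter_filter] using hclaw.card_filter_adj_le_two hA u

/-- When `w(f) = n/2`, the three estimates of the double count are equalities. -/
theorem estimates_tight (hclaw : ClawFree G) (hf : IsOI2RD G f)
    (hw : 2 * ∑ v, #(f v) = Fintype.card V) :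
    ∑ v, #(f v) ≤ #{v | f v ≠ ∅} ∧
    ∑ v with f v = ∅, ∑ u ∈ G.neighborFinset v, #(f u) ≤ ∑ v with f v = ∅, 2 ∧
    ∑ u, 2 * #(f u) ≤ ∑ u, #{x | f x = ∅ ∧ G.Adj u x} * #(f u) := by
  have hsupp := card_filter_ne_empty_le_sum_card univ f
  have hpart : #{v | f v = ∅} + #{v | f v ≠ ∅} = Fintype.card V :=
    card_filter_add_card_filter_not _
  have hlow : ∑ v with f v = ∅, 2 ≤ ∑ v with f v = ∅, ∑ u ∈ G.neighborFinset v, #(f u) :=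
    sum_le_sum fun v hv => hf.two_le_sum_card_neighborFinset (mem_filter.mp hv).2
  have hup : ∑ u, #{x | f x = ∅ ∧ G.Adj u x} * #(f u) ≤ ∑ u, 2 * #(f u) :=
    sum_le_sum fun u _ => Nat.mul_le_mul_right _ (hf.card_filter_empty_adj_le_two hclaw u)
  have hcount := G.sum_sum_neighborFinset {v | f v = ∅} (fun u => #(f u))
  simp only [filter_filter, smul_eq_mul] at hcount
  rw [sum_const, smul_eq_mul] at hlow ⊢
  rw [← mul_sum] at hup ⊢
  omega

theorem card_le_one (hclaw : ClawFree G) (hf : IsOI2RD G f)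
    (hw : 2 * ∑ v, #(f v) = Fintype.card V) (v : V) : #(f v) ≤ 1 :=
  card_le_one_of_sum_card_le_card_filter_ne_empty (hf.estimates_tight hclaw hw).1 (mem_univ v)

theorem eq_singleton_of_mem (hclaw : ClawFree G) (hf : IsOI2RD G f)
    (hw : 2 * ∑ v, #(f v) = Fintype.card V) {v : V} {c : Fin 2} (hc : c ∈ f v) : f v = {c} :=
  eq_singleton_iff_unique_mem.mpr
    ⟨hc, fun _ hx => card_le_one_iff.mp (hf.card_le_one hclaw hw v) hx hc⟩

theorem degree_eq_two (hclaw : ClawFree G) (hf : IsOI2RD G f)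
    (hw : 2 * ∑ v, #(f v) = Fintype.card V) {v : V} (hv : f v = ∅) : G.degree v = 2 := by
  have hlow : ∀ v ∈ ({v | f v = ∅} : Finset V), 2 ≤ ∑ u ∈ G.neighborFinset v, #(f u) :=
    fun v hv => hf.two_le_sum_card_neighborFinset (mem_filter.mp hv).2
  have hsum : ∑ u ∈ G.neighborFinset v, #(f u) = 2 :=
    ((sum_eq_sum_iff_of_le hlow).mp (le_antisymm (sum_le_sum hlow)
      (hf.estimates_tight hclaw hw).2.1) v (mem_filter.mpr ⟨mem_univ v, hv⟩)).symm
  have hone : ∀ u ∈ G.neighborFinset v, #(f u) = 1 := fun u hu =>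
    le_antisymm (hf.card_le_one hclaw hw u) (card_pos.mpr (nonempty_iff_ne_empty.mpr
      (hf.ne_empty_of_adj hv ((G.mem_neighborFinset v u).mp hu))))
  rwa [sum_congr rfl hone, sum_const, smul_eq_mul, mul_one, G.card_neighborFinset_eq_degree] at hsum

theorem card_filter_empty_adj_eq_two (hclaw : ClawFree G) (hf : IsOI2RD G f)
    (hw : 2 * ∑ v, #(f v) = Fintype.card V) {u : V} (hu : #(f u) = 1) :
    #{x | f x = ∅ ∧ G.Adj u x} = 2 := by
  have hle : ∀ u ∈ univ, #{x | f x = ∅ ∧ G.Adj u x} * #(f u) ≤ 2 * #(f u) := fun u _ =>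
    Nat.mul_le_mul_right _ (hf.card_filter_empty_adj_le_two hclaw u)
  have := (sum_eq_sum_iff_of_le hle).mp
    (le_antisymm (sum_le_sum hle) (hf.estimates_tight hclaw hw).2.2) u (mem_univ u)
  rwa [hu, mul_one, mul_one] at this

theorem existsUnique_adj_eq_singleton (hclaw : ClawFree G) (hf : IsOI2RD G f)
    (hw : 2 * ∑ v, #(f v) = Fintype.card V) {v : V} (hv : f v = ∅) (c : Fin 2) :
    ∃! u, G.Adj v u ∧ f u = {c} := by
  classical
  obtain ⟨u, hvu, hcu⟩ := hf.1 v hv c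
  obtain ⟨u', hvu', hcu'⟩ := hf.1 v hv (c + 1)
  have hfu' : f u' = {c + 1} := hf.eq_singleton_of_mem hclaw hw hcu'
  have hne_u' : ∀ x, f x = {c} → x ≠ u' := by
    rintro x hx rfl
    rw [hfu', singleton_inj] at hx
    fin_cases c <;> simp at hx
  refine ⟨u, ⟨hvu, hf.eq_singleton_of_mem hclaw hw hcu⟩, fun y ⟨hvy, hy⟩ => ?_⟩
  by_contra hyu
  have hsub : {y, u, u'} ⊆ G.neighborFinset v := by
    simp [insert_subset_iff, hvy, hvu, hvu']
  have h3 : #{y, u, u'} = 3 := card_eq_three.mpr ⟨y, u, u', hyu, hne_u' y hy,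
    hne_u' u (hf.eq_singleton_of_mem hclaw hw hcu), rfl⟩
  have := card_le_card hsub
  rw [h3, G.card_neighborFinset_eq_degree, hf.degree_eq_two hclaw hw hv] at this
  omega

theorem card_filter_adj_ne_empty_le_two (hclaw : ClawFree G) (hf : IsOI2RD G f)
    (hw : 2 * ∑ v, #(f v) = Fintype.card V) {u : V} (hu : #(f u) = 1) :
    #{x | G.Adj u x ∧ f x ≠ ∅} ≤ 2 := by
  classical
  obtain ⟨a, b, hab, hAB⟩ := card_eq_two.mp (hf.card_filter_empty_adj_eq_two hclaw hw hu)
  have hmem : ∀ x, f x = ∅ ∧ G.Adj u x ↔ x = a ∨ x = b := fun x => by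
    simpa using congrArg (x ∈ ·) hAB
  obtain ⟨hfa, hua⟩ := (hmem a).mpr (Or.inl rfl)
  obtain ⟨hfb, hub⟩ := (hmem b).mpr (Or.inr rfl)
  have hsub : ({x | G.Adj u x ∧ f x ≠ ∅} : Finset V) ⊆
      (G.neighborFinset a).erase u ∪ (G.neighborFinset b).erase u := by
    intro x hx
    obtain ⟨hux, hfx⟩ := (mem_filter.mp hx).2
    have hxa : a ≠ x := by rintro rfl; exact hfx hfa
    have hxb : b ≠ x := by rintro rfl; exact hfx hfb
    have hxu : x ≠ u := (G.ne_of_adj hux).symm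
    rcases hclaw.adj_or_adj hua hub hux hab hxa hxb (hf.2 a b hfa hfb) with h | h
    · exact mem_union_left _ (mem_erase.mpr ⟨hxu, (G.mem_neighborFinset a x).mpr h⟩)
    · exact mem_union_right _ (mem_erase.mpr ⟨hxu, (G.mem_neighborFinset b x).mpr h⟩)
  calc #{x | G.Adj u x ∧ f x ≠ ∅}
      ≤ #((G.neighborFinset a).erase u ∪ (G.neighborFinset b).erase u) := card_le_card hsub
    _ ≤ #((G.neighborFinset a).erase u) + #((G.neighborFinset b).erase u) := card_union_le _ _
    _ = 2 := by
      rw [card_erase_of_mem ((G.mem_neighborFinset a u).mpr hua.symm),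
        card_erase_of_mem ((G.mem_neighborFinset b u).mpr hub.symm),
        G.card_neighborFinset_eq_degree, G.card_neighborFinset_eq_degree,
        hf.degree_eq_two hclaw hw hfa, hf.degree_eq_two hclaw hw hfb]

end IsOI2RD

end

/-- Color `1` is represented by `0 : Fin 2` and color `2` by `1 : Fin 2`, so
`V_{1} = f⁻¹ {0}`, `V_{2} = f⁻¹ {1}` and `V_{12} = f⁻¹ {0,1}`. -/
theorem structure_of_half_order_OI2RD_general
    {V : Type*} [Fintype V] (G : SimpleGraph V)
    (hclaw : ClawFree G)
    (f : V → Finset (Fin 2)) (hf : IsOI2RD G f)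
    (hw : ((∑ v, (f v).card : ℕ) : ℝ) = (Fintype.card V : ℝ) / 2) :
    -- (i) V_{12} = ∅
    (∀ v, f v ≠ ({0, 1} : Finset (Fin 2))) ∧
    -- (ii) every vertex of V_∅ has exactly one neighbor in V_{1} and exactly one in V_{2}
    (∀ v, f v = ∅ →
      (∃! u, G.Adj v u ∧ f u = ({0} : Finset (Fin 2))) ∧
      (∃! u, G.Adj v u ∧ f u = ({1} : Finset (Fin 2)))) ∧
    -- (iii) every vertex of V_{1} ∪ V_{2} has exactly two neighbors in V_∅
    (∀ v, (f v = ({0} : Finset (Fin 2)) ∨ f v = ({1} : Finset (Fin 2))) →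
      {u | G.Adj v u ∧ f u = ∅}.ncard = 2) ∧
    -- (iv) the subgraph induced by V_{1} ∪ V_{2} has maximum degree at most 2
    (∀ v, (f v = ({0} : Finset (Fin 2)) ∨ f v = ({1} : Finset (Fin 2))) →
      {u | G.Adj v u ∧ (f u = ({0} : Finset (Fin 2)) ∨ f u = ({1} : Finset (Fin 2)))}.ncard ≤ 2) := by
  classical
  have hweight : 2 * ∑ v, #(f v) = Fintype.card V := by
    rw [eq_div_iff two_ne_zero] at hw
    exact_mod_cast (mul_comm _ _).trans hw
  have hcard : ∀ v, f v = {0} ∨ f v = {1} → #(f v) = 1 := by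
    rintro v (h | h) <;> rw [h, card_singleton]
  refine ⟨fun v hv => ?_, fun v hv => ⟨?_, ?_⟩, fun v hv => ?_, fun v hv => ?_⟩
  · simpa [hv] using hf.card_le_one hclaw hweight v
  · exact hf.existsUnique_adj_eq_singleton hclaw hweight hv 0
  · exact hf.existsUnique_adj_eq_singleton hclaw hweight hv 1
  · rw [← coe_filter_univ, Set.ncard_coe_finset]
    simpa only [and_comm] using hf.card_filter_empty_adj_eq_two hclaw hweight (hcard v hv)
  · refine (Set.ncard_le_ncard (t := ↑({x | G.Adj v x ∧ f x ≠ ∅} : Finset V)) ?_).trans ?_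
    · rintro x ⟨hvx, hx | hx⟩ <;> simp [hvx, hx]
    · rw [Set.ncard_coe_finset]
      exact hf.card_filter_adj_ne_empty_le_two hclaw hweight (hcard v hv)

/-- Structure of minimum-weight OI2RD functions on connected claw-free graphs
attaining the bound `n/2`.  Here color `1` is represented by `0 : Fin 2` and
color `2` by `1 : Fin 2`, so `V_{1} = f⁻¹ {0}`, `V_{2} = f⁻¹ {1}` and
`V_{12} = f⁻¹ {0,1}`. -/
theorem structure_of_half_order_OI2RD
    {V : Type*} [Fintype V] (G : SimpleGraph V)
    (hconn : G.Connected) (hclaw : ClawFree G)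
    (hG : (oir2 G : ℝ) = (Fintype.card V : ℝ) / 2)
    (f : V → Finset (Fin 2)) (hf : IsOI2RD G f)
    (hw : ((∑ v, (f v).card : ℕ) : ℝ) = (Fintype.card V : ℝ) / 2) :
    -- (i) V_{12} = ∅
    (∀ v, f v ≠ ({0, 1} : Finset (Fin 2))) ∧
    -- (ii) every vertex of V_∅ has exactly one neighbor in V_{1} and exactly one in V_{2}
    (∀ v, f v = ∅ →
      (∃! u, G.Adj v u ∧ f u = ({0} : Finset (Fin 2))) ∧
      (∃! u, G.Adj v u ∧ f u = ({1} : Finset (Fin 2)))) ∧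
    -- (iii) every vertex of V_{1} ∪ V_{2} has exactly two neighbors in V_∅
    (∀ v, (f v = ({0} : Finset (Fin 2)) ∨ f v = ({1} : Finset (Fin 2))) →
      {u | G.Adj v u ∧ f u = ∅}.ncard = 2) ∧
    -- (iv) the subgraph induced by V_{1} ∪ V_{2} has maximum degree at most 2
    (∀ v, (f v = ({0} : Finset (Fin 2)) ∨ f v = ({1} : Finset (Fin 2))) →
      {u | G.Adj v u ∧ (f u = ({0} : Finset (Fin 2)) ∨ f u = ({1} : Finset (Fin 2)))}.ncard ≤ 2) :=
  structure_of_half_order_OI2RD_general G hclaw f hf hw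
end

section
/- For every integer n ≥ 3, the cycle C_n of order n satisfies γ_oir2(C_n) = n/2 if and only if n ≡ 0 (mod 4). -/
/-!
For a rainbow dominating `f` on `C_n` (vertices `ℤ/n`), the neighbourhood weight
`s(v) = |f(v-1)| + |f(v+1)| + 2|f(v)|` is at least `2` at every vertex, while
`∑ s(v) = 4 w(f)`; hence `2 w(f) ≥ n`. If `2 w(f) = n`, then `s ≡ 2`, which forces `f(v-1)`
and `f(v+1)` together to contain colour `0` exactly as often as colour `1`. Summing over `v`,
both colours are used equally often, so `n = 2 w(f) = 4 · #{v | 0 ∈ f v}`. Conversely, when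
`4 ∣ n` the pattern `∅, {0}, ∅, {1}` repeated around the cycle is outer-independent and has
`s ≡ 2`, so weight `n/2`.
-/

open Finset SimpleGraph

theorem IsOI2RD.oir2_le {V : Type*} [Fintype V] {G : SimpleGraph V} {f : V → Finset (Fin 2)}
    (hf : IsOI2RD G f) : oir2 G ≤ ∑ v, #(f v) :=
  Nat.sInf_le ⟨f, hf, rfl⟩

theorem exists_isOI2RD_sum_card_eq_oir2 {V : Type*} [Fintype V] (G : SimpleGraph V) :
    ∃ f : V → Finset (Fin 2), IsOI2RD G f ∧ ∑ v, #(f v) = oir2 G := by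
  have hfull : IsOI2RD G fun _ => univ :=
    ⟨fun _ h => absurd h univ_nonempty.ne_empty,
      fun _ _ h => absurd h univ_nonempty.ne_empty⟩
  obtain ⟨f, hf, hw⟩ := Nat.sInf_mem
    (s := {w | ∃ f : V → Finset (Fin 2), IsOI2RD G f ∧ w = ∑ v, #(f v)})
    ⟨_, _, hfull, rfl⟩
  exact ⟨f, hf, hw.symm⟩

theorem Fintype.sum_sub_add_add {G M : Type*} [AddGroup G] [Fintype G] [AddCommMonoid M]
    (g : G → M) (a : G) : ∑ v, (g (v - a) + g (v + a)) = 2 • ∑ v, g v := by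
  rw [sum_add_distrib, two_nsmul,
    Fintype.sum_equiv (Equiv.subRight a) (fun v => g (v - a)) g fun _ => rfl,
    Fintype.sum_equiv (Equiv.addRight a) (fun v => g (v + a)) g fun _ => rfl]

theorem two_le_card_add_card_add_two_mul_card {a b c : Finset (Fin 2)}
    (h : b = ∅ → ∀ i, i ∈ a ∨ i ∈ c) : 2 ≤ #a + #c + 2 * #b := by
  revert a b c
  decide

/-- If `b = ∅`, then `a` and `c` are singletons of different colours; otherwise both are empty. -/
theorem ite_mem_zero_add_eq_ite_mem_one_add {a b c : Finset (Fin 2)}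
    (h : b = ∅ → ∀ i, i ∈ a ∨ i ∈ c) (h2 : #a + #c + 2 * #b = 2) :
    (if 0 ∈ a then 1 else 0) + (if 0 ∈ c then 1 else 0) =
      (if 1 ∈ a then 1 else 0) + (if 1 ∈ c then 1 else 0) := by
  revert a b c
  decide

section Cycle

variable {m : ℕ}

theorem SimpleGraph.cycleGraph_adj_iff_eq_sub_one_or_eq_add_one {v u : Fin (m + 2)} :
    (cycleGraph (m + 2)).Adj v u ↔ u = v - 1 ∨ u = v + 1 := by
  rw [← mem_neighborSet, cycleGraph_neighborSet]
  rfl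

theorem isOI2RD_cycleGraph_iff {f : Fin (m + 2) → Finset (Fin 2)} :
    IsOI2RD (cycleGraph (m + 2)) f ↔
      (∀ v, f v = ∅ → ∀ c, c ∈ f (v - 1) ∨ c ∈ f (v + 1)) ∧
        ∀ v, f v = ∅ → f (v + 1) ≠ ∅ := by
  simp only [IsOI2RD, cycleGraph_adj_iff_eq_sub_one_or_eq_add_one]
  constructor
  · rintro ⟨hdom, hind⟩
    refine ⟨fun v hv c => ?_, fun v hv hv' => hind v (v + 1) hv hv' (Or.inr rfl)⟩
    obtain ⟨u, rfl | rfl, hu⟩ := hdom v hv c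
    exacts [Or.inl hu, Or.inr hu]
  · rintro ⟨hdom, hind⟩
    refine ⟨fun v hv c => ?_, ?_⟩
    · rcases hdom v hv c with h | h
      exacts [⟨_, Or.inl rfl, h⟩, ⟨_, Or.inr rfl, h⟩]
    · rintro u w hu hw (rfl | rfl)
      · exact hind _ hw (by rwa [sub_add_cancel])
      · exact hind u hu hw

def nbhdWeight (f : Fin (m + 2) → Finset (Fin 2)) (v : Fin (m + 2)) : ℕ :=
  #(f (v - 1)) + #(f (v + 1)) + 2 * #(f v)

theorem sum_nbhdWeight (f : Fin (m + 2) → Finset (Fin 2)) :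
    ∑ v, nbhdWeight f v = 4 * ∑ v, #(f v) := by
  unfold nbhdWeight
  rw [sum_add_distrib, Fintype.sum_sub_add_add (fun v => #(f v)), ← mul_sum, smul_eq_mul]
  ring

theorem IsOI2RD.two_le_nbhdWeight {f : Fin (m + 2) → Finset (Fin 2)}
    (hf : IsOI2RD (cycleGraph (m + 2)) f) (v : Fin (m + 2)) : 2 ≤ nbhdWeight f v :=
  two_le_card_add_card_add_two_mul_card ((isOI2RD_cycleGraph_iff.mp hf).1 v)

theorem IsOI2RD.le_two_mul_sum_card {f : Fin (m + 2) → Finset (Fin 2)}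
    (hf : IsOI2RD (cycleGraph (m + 2)) f) : m + 2 ≤ 2 * ∑ v, #(f v) := by
  have hsum := sum_le_sum fun v (_ : v ∈ univ) => hf.two_le_nbhdWeight v
  rw [sum_nbhdWeight, sum_const, card_univ, Fintype.card_fin, smul_eq_mul] at hsum
  omega

theorem IsOI2RD.four_dvd_of_two_mul_sum_card_eq {f : Fin (m + 2) → Finset (Fin 2)}
    (hf : IsOI2RD (cycleGraph (m + 2)) f) (heq : 2 * ∑ v, #(f v) = m + 2) : 4 ∣ m + 2 := by
  have htight : ∀ v, nbhdWeight f v = 2 := by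
    have hsum : ∑ _v : Fin (m + 2), 2 = ∑ v, nbhdWeight f v := by
      rw [sum_nbhdWeight, sum_const, card_univ, Fintype.card_fin, smul_eq_mul]
      omega
    exact fun v => ((sum_eq_sum_iff_of_le fun v _ => hf.two_le_nbhdWeight v).mp
      hsum v (mem_univ v)).symm
  have hcount : ∑ v, (if 0 ∈ f v then 1 else 0) = ∑ v, if 1 ∈ f v then 1 else 0 := by
    have hdom := (isOI2RD_cycleGraph_iff.mp hf).1
    have := Fintype.sum_sub_add_add (fun v => if (0 : Fin 2) ∈ f v then 1 else 0) 1
    rw [Fintype.sum_congr _ _ fun v => ite_mem_zero_add_eq_ite_mem_one_add (hdom v) (htight v),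
      Fintype.sum_sub_add_add (fun v => if (1 : Fin 2) ∈ f v then 1 else 0)] at this
    simp only [smul_eq_mul] at this
    omega
  have hweight :
      ∑ v, #(f v) = ∑ v, (if 0 ∈ f v then 1 else 0) + ∑ v, if 1 ∈ f v then 1 else 0 := by
    simp only [card_eq_sum_ite (subset_univ (f _)), Fin.sum_univ_two, sum_add_distrib]
  exact ⟨∑ v, if 0 ∈ f v then 1 else 0, by omega⟩

def pattern4 : ZMod 4 → Finset (Fin 2) := ![∅, {0}, ∅, {1}]

theorem Fin.natCast_val_add_one {d : ℕ} (hd : d ∣ m + 2) (v : Fin (m + 2)) :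
    (((v + 1 : Fin (m + 2)) : ℕ) : ZMod d) = (v : ℕ) + 1 := by
  rw [Fin.val_add, Fin.val_one, ← Nat.cast_add_one, ZMod.natCast_eq_natCast_iff',
    Nat.mod_mod_of_dvd _ hd]

theorem Fin.natCast_val_sub_one {d : ℕ} (hd : d ∣ m + 2) (v : Fin (m + 2)) :
    (((v - 1 : Fin (m + 2)) : ℕ) : ZMod d) = (v : ℕ) - 1 := by
  rw [eq_sub_iff_add_eq, ← Fin.natCast_val_add_one hd, sub_add_cancel]

theorem isOI2RD_pattern4 (h4 : 4 ∣ m + 2) :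
    IsOI2RD (cycleGraph (m + 2)) fun v => pattern4 (v : ℕ) := by
  have hdom :
      ∀ x, pattern4 x = ∅ → ∀ c, c ∈ pattern4 (x - 1) ∨ c ∈ pattern4 (x + 1) := by
    decide
  have hind : ∀ x, pattern4 x = ∅ → pattern4 (x + 1) ≠ ∅ := by decide
  rw [isOI2RD_cycleGraph_iff]
  simp only [Fin.natCast_val_add_one h4, Fin.natCast_val_sub_one h4]
  exact ⟨fun v => hdom _, fun v => hind _⟩

theorem two_mul_sum_card_pattern4 (h4 : 4 ∣ m + 2) :
    2 * ∑ v : Fin (m + 2), #(pattern4 (v : ℕ)) = m + 2 := by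
  have hlocal : ∀ x, #(pattern4 (x - 1)) + #(pattern4 (x + 1)) + 2 * #(pattern4 x) = 2 := by
    decide
  have hsum : ∑ v, nbhdWeight (fun v : Fin (m + 2) => pattern4 (v : ℕ)) v = ∑ _v, 2 :=
    Fintype.sum_congr _ _ fun v => by
      simpa only [nbhdWeight, Fin.natCast_val_sub_one h4, Fin.natCast_val_add_one h4]
        using hlocal v
  rw [sum_nbhdWeight, sum_const, card_univ, Fintype.card_fin, smul_eq_mul] at hsum
  omega

end Cycle

/-- For `n ≥ 3`, the cycle `C_n` satisfies `γ_oir2(C_n) = n/2` iff `n ≡ 0 (mod 4)`. -/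
theorem oir2_cycle_eq_half_iff (n : ℕ) (hn : 3 ≤ n) :
    (oir2 (SimpleGraph.cycleGraph n) : ℝ) = (n : ℝ) / 2 ↔ n % 4 = 0 := by
  obtain ⟨m, rfl⟩ : ∃ m, n = m + 2 := ⟨n - 2, by omega⟩
  obtain ⟨f, hf, hw⟩ := exists_isOI2RD_sum_card_eq_oir2 (cycleGraph (m + 2))
  have hlower := hf.le_two_mul_sum_card
  rw [eq_div_iff two_ne_zero, ← Nat.dvd_iff_mod_eq_zero]
  norm_cast
  constructor
  · intro h
    exact hf.four_dvd_of_two_mul_sum_card_eq (by omega)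
  · intro h4
    have hupper := (isOI2RD_pattern4 h4).oir2_le
    have := two_mul_sum_card_pattern4 h4
    omega
end

section
/- If G and H are graphs with no isolated vertices, then γ_oir2(G × H) ≤ min{γ_oir2(H)·|V(G)|, γ_oir2(G)·|V(H)|}, where G × H is the direct (tensor) product of G and H. -/
/-- The direct (tensor) product of two graphs. -/
def directProd {α β : Type*} (G : SimpleGraph α) (H : SimpleGraph β) :
    SimpleGraph (α × β) where
  Adj x y := G.Adj x.1 y.1 ∧ H.Adj x.2 y.2
  symm := ⟨fun x y h => ⟨h.1.symm, h.2.symm⟩⟩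
  loopless := ⟨fun x h => G.irrefl h.1⟩

lemma oir2_set_nonempty {V : Type*} [Fintype V] (G : SimpleGraph V) :
    {w | ∃ f : V → Finset (Fin 2), IsOI2RD G f ∧ w = ∑ v, (f v).card}.Nonempty := by
  refine ⟨_, fun _ => Finset.univ, ⟨?_, ?_⟩, rfl⟩
  · intro v hv; simp [Finset.univ_eq_empty_iff] at hv
  · intro u w hu _; simp [Finset.univ_eq_empty_iff] at hu

theorem oir2_directProd_le
    {α β : Type*} [Fintype α] [Fintype β]
    (G : SimpleGraph α) (H : SimpleGraph β)
    (hG : ∀ v, ∃ u, G.Adj v u) (hH : ∀ v, ∃ u, H.Adj v u) :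
    oir2 (directProd G H) ≤
      min (oir2 H * Fintype.card α) (oir2 G * Fintype.card β) := by
  apply le_min
  · obtain ⟨f, ⟨hdom, hind⟩, hw⟩ := Nat.sInf_mem (oir2_set_nonempty H)
    apply Nat.sInf_le
    refine ⟨fun p => f p.2, ⟨?_, ?_⟩, ?_⟩
    · rintro ⟨a, b⟩ hv c
      obtain ⟨u, hu, hcu⟩ := hdom b hv c
      obtain ⟨a', ha'⟩ := hG a
      exact ⟨(a', u), ⟨ha', hu⟩, hcu⟩
    · rintro ⟨a, b⟩ ⟨a', b'⟩ hu hw' ⟨_, hadj⟩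
      exact hind b b' hu hw' hadj
    · have : ∑ p : α × β, (f p.2).card = Fintype.card α * ∑ v, (f v).card := by
        rw [Fintype.sum_prod_type]
        simp [Finset.sum_const, Finset.card_univ]
      rw [this, ← hw, mul_comm]; rfl
  · obtain ⟨f, ⟨hdom, hind⟩, hw⟩ := Nat.sInf_mem (oir2_set_nonempty G)
    apply Nat.sInf_le
    refine ⟨fun p => f p.1, ⟨?_, ?_⟩, ?_⟩
    · rintro ⟨a, b⟩ hv c
      obtain ⟨u, hu, hcu⟩ := hdom a hv c
      obtain ⟨b', hb'⟩ := hH b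
      exact ⟨(u, b'), ⟨hu, hb'⟩, hcu⟩
    · rintro ⟨a, b⟩ ⟨a', b'⟩ hu hw' ⟨hadj, _⟩
      exact hind a a' hu hw' hadj
    · have : ∑ p : α × β, (f p.1).card = Fintype.card β * ∑ v, (f v).card := by
        rw [Fintype.sum_prod_type_right]
        simp [Finset.sum_const, Finset.card_univ]
      rw [this, ← hw, mul_comm]; rfl
end

section
/- If G and H are graphs with no isolated vertices, then γ_oir2(G □ H) ≤ α(G)β(H) + β(G)|V(H)| − min{β(G), β(H)}, where G □ H is the Cartesian product, α denotes the independence number, and β denotes the vertex cover number. -/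
/-- The independence number `α(G)`. -/
noncomputable def alphaNum {V : Type*} [Fintype V] (G : SimpleGraph V) : ℕ :=
  sSup {k | ∃ s : Finset V, (∀ u ∈ s, ∀ w ∈ s, ¬ G.Adj u w) ∧ s.card = k}

/-- The vertex cover number `β(G)`. -/
noncomputable def betaNum {V : Type*} [Fintype V] (G : SimpleGraph V) : ℕ :=
  sInf {k | ∃ s : Finset V, (∀ u w, G.Adj u w → u ∈ s ∨ w ∈ s) ∧ s.card = k}

section Aux

lemma exists_min_cover {V : Type*} [Fintype V] (G : SimpleGraph V) :
    ∃ s : Finset V, (∀ u w, G.Adj u w → u ∈ s ∨ w ∈ s) ∧ s.card = betaNum G := by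
  have hne : {k | ∃ s : Finset V, (∀ u w, G.Adj u w → u ∈ s ∨ w ∈ s) ∧ s.card = k}.Nonempty :=
    ⟨Finset.univ.card, Finset.univ, fun u w _ => Or.inl (Finset.mem_univ u), rfl⟩
  obtain ⟨s, hs, hcard⟩ := Nat.sInf_mem hne
  exact ⟨s, hs, hcard⟩

lemma betaNum_le {V : Type*} [Fintype V] (G : SimpleGraph V) (s : Finset V)
    (h : ∀ u w, G.Adj u w → u ∈ s ∨ w ∈ s) : betaNum G ≤ s.card :=
  Nat.sInf_le ⟨s, h, rfl⟩

lemma le_alphaNum {V : Type*} [Fintype V] (G : SimpleGraph V) (s : Finset V)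
    (h : ∀ u ∈ s, ∀ w ∈ s, ¬ G.Adj u w) : s.card ≤ alphaNum G := by
  apply le_csSup
  · refine ⟨Fintype.card V, fun k hk => ?_⟩
    obtain ⟨t, -, rfl⟩ := hk
    exact t.card_le_univ
  · exact ⟨s, h, rfl⟩

/-- every vertex of a minimum vertex cover has a neighbor outside the cover -/
lemma min_cover_neighbor {V : Type*} [Fintype V] (G : SimpleGraph V) (s : Finset V)
    (hcov : ∀ u w, G.Adj u w → u ∈ s ∨ w ∈ s) (hcard : s.card = betaNum G)
    {b : V} (hb : b ∈ s) : ∃ b', G.Adj b b' ∧ b' ∉ s := by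
  classical
  by_contra hcon
  push_neg at hcon
  have hc : ∀ u w, G.Adj u w → u ∈ s.erase b ∨ w ∈ s.erase b := by
    intro u w huw
    rcases hcov u w huw with hu | hw
    · by_cases hub : u = b
      · subst hub
        exact Or.inr (Finset.mem_erase.2 ⟨huw.ne', hcon w huw⟩)
      · exact Or.inl (Finset.mem_erase.2 ⟨hub, hu⟩)
    · by_cases hwb : w = b
      · subst hwb
        exact Or.inl (Finset.mem_erase.2 ⟨huw.ne, hcon u huw.symm⟩)
      · exact Or.inr (Finset.mem_erase.2 ⟨hwb, hw⟩)
  have h1 := betaNum_le G (s.erase b) hc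
  rw [Finset.card_erase_of_mem hb] at h1
  have h2 : 1 ≤ s.card := Finset.card_pos.2 ⟨b, hb⟩
  omega

open Classical in
/-- the OI2RD function used in the construction -/
noncomputable def theF {V W : Type*} (BG : Finset V) (BH : Finset W)
    {m : ℕ} (gG : Fin m → V) (gH : Fin m → W) : V × W → Finset (Fin 2) :=
  fun p =>
    if p.1 ∉ BG ∧ p.2 ∉ BH then ∅
    else if ∃ i, gG i = p.1 ∧ gH i = p.2 then ∅
    else if p.2 ∈ BH then {0} else {1}

variable {V W : Type*} (BG : Finset V) (BH : Finset W) {m : ℕ} (gG : Fin m → V) (gH : Fin m → W)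

lemma theF_empty1 {p : V × W} (h1 : p.1 ∉ BG) (h2 : p.2 ∉ BH) :
    theF BG BH gG gH p = ∅ := by
  unfold theF; rw [if_pos ⟨h1, h2⟩]

lemma theF_empty2 {p : V × W} (hm : ∃ i, gG i = p.1 ∧ gH i = p.2) :
    theF BG BH gG gH p = ∅ := by
  by_cases h1 : p.1 ∉ BG ∧ p.2 ∉ BH
  · exact theF_empty1 BG BH gG gH h1.1 h1.2
  · unfold theF; rw [if_neg h1, if_pos hm]

lemma theF_zero {p : V × W} (h3 : p.2 ∈ BH) (hm : ¬ ∃ i, gG i = p.1 ∧ gH i = p.2) :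
    theF BG BH gG gH p = {0} := by
  unfold theF
  rw [if_neg (fun h => h.2 h3), if_neg hm, if_pos h3]

lemma theF_one {p : V × W} (h1 : p.1 ∈ BG) (h3 : p.2 ∉ BH)
    (hm : ¬ ∃ i, gG i = p.1 ∧ gH i = p.2) :
    theF BG BH gG gH p = {1} := by
  unfold theF
  rw [if_neg (fun h => h.1 h1), if_neg hm, if_neg h3]

lemma theF_eq_empty_iff {p : V × W} :
    theF BG BH gG gH p = ∅ ↔ (p.1 ∉ BG ∧ p.2 ∉ BH) ∨ ∃ i, gG i = p.1 ∧ gH i = p.2 := by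
  by_cases h1 : p.1 ∉ BG ∧ p.2 ∉ BH
  · exact iff_of_true (theF_empty1 BG BH gG gH h1.1 h1.2) (Or.inl h1)
  · by_cases h2 : ∃ i, gG i = p.1 ∧ gH i = p.2
    · exact iff_of_true (theF_empty2 BG BH gG gH h2) (Or.inr h2)
    · by_cases h3 : p.2 ∈ BH
      · rw [theF_zero BG BH gG gH h3 h2]
        refine iff_of_false (Finset.singleton_ne_empty _) ?_
        rintro (h | h)
        · exact h.2 h3
        · exact h2 h
      · have hp1 : p.1 ∈ BG := by
          by_contra hc; exact h1 ⟨hc, h3⟩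
        rw [theF_one BG BH gG gH hp1 h3 h2]
        refine iff_of_false (Finset.singleton_ne_empty _) ?_
        rintro (h | h)
        · exact h.1 hp1
        · exact h2 h

open Classical in
lemma theF_card (hgH : ∀ i, gH i ∈ BH) (p : V × W) :
    (theF BG BH gG gH p).card =
      (if p.2 ∈ BH ∧ ¬ ∃ i, gG i = p.1 ∧ gH i = p.2 then 1 else 0) +
      (if p.1 ∈ BG ∧ p.2 ∉ BH then 1 else 0) := by
  by_cases h1 : p.1 ∉ BG ∧ p.2 ∉ BH
  · rw [theF_empty1 BG BH gG gH h1.1 h1.2, if_neg (fun h => h1.2 h.1),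
      if_neg (fun h => h1.1 h.1)]
    simp
  · by_cases h2 : ∃ i, gG i = p.1 ∧ gH i = p.2
    · have hmem : p.2 ∈ BH := by
        obtain ⟨i, hi1, hi2⟩ := h2; exact hi2 ▸ hgH i
      rw [theF_empty2 BG BH gG gH h2, if_neg (fun h => h.2 h2),
        if_neg (fun h => h.2 hmem)]
      simp
    · by_cases h3 : p.2 ∈ BH
      · rw [theF_zero BG BH gG gH h3 h2, if_pos ⟨h3, h2⟩, if_neg (fun h => h.2 h3)]
        simp
      · have hp1 : p.1 ∈ BG := by
          by_contra hc; exact h1 ⟨hc, h3⟩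
        rw [theF_one BG BH gG gH hp1 h3 h2, if_neg (fun h => h3 h.1), if_pos ⟨hp1, h3⟩]
        simp

end Aux

theorem oir2_boxProd_le
    {α β : Type*} [Fintype α] [Fintype β]
    (G : SimpleGraph α) (H : SimpleGraph β)
    (hG : ∀ v, ∃ u, G.Adj v u) (hH : ∀ v, ∃ u, H.Adj v u) :
    (oir2 (G □ H) : ℤ) ≤
      (alphaNum G : ℤ) * betaNum H + (betaNum G : ℤ) * Fintype.card β -
        min (betaNum G : ℤ) (betaNum H : ℤ) := by
  classical
  obtain ⟨BG, hcovG, hBGcard⟩ := exists_min_cover G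
  obtain ⟨BH, hcovH, hBHcard⟩ := exists_min_cover H
  set m := min BG.card BH.card with hmdef
  have hmG : m ≤ BG.card := min_le_left _ _
  have hmH : m ≤ BH.card := min_le_right _ _
  -- the partial matching
  let gG : Fin m → α := fun i => (BG.equivFin.symm ⟨i.1, lt_of_lt_of_le i.2 hmG⟩ : {x // x ∈ BG}).1
  let gH : Fin m → β := fun i => (BH.equivFin.symm ⟨i.1, lt_of_lt_of_le i.2 hmH⟩ : {x // x ∈ BH}).1
  have hgGmem : ∀ i, gG i ∈ BG := fun i => (BG.equivFin.symm _).2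
  have hgHmem : ∀ i, gH i ∈ BH := fun i => (BH.equivFin.symm _).2
  have hgGinj : Function.Injective gG := by
    intro i j hij
    have := BG.equivFin.symm.injective (Subtype.ext hij)
    simpa [Fin.ext_iff] using congrArg Fin.val this
  have hgHinj : Function.Injective gH := by
    intro i j hij
    have := BH.equivFin.symm.injective (Subtype.ext hij)
    simpa [Fin.ext_iff] using congrArg Fin.val this
  have hminH : ∀ b ∈ BH, ∃ b', H.Adj b b' ∧ b' ∉ BH :=
    fun b hb => min_cover_neighbor H BH hcovH hBHcard hb
  set f : α × β → Finset (Fin 2) := theF BG BH gG gH with hfdef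
  -- f is an OI2RD function of G □ H
  have hOI : IsOI2RD (G □ H) f := by
    constructor
    · intro v hv c
      rw [hfdef, theF_eq_empty_iff] at hv
      rcases hv with ⟨hu, hb⟩ | ⟨i, hgi, hhi⟩
      · fin_cases c
        · obtain ⟨b', hb'⟩ := hH v.2
          have hb'B : b' ∈ BH := (hcovH v.2 b' hb').resolve_left hb
          have hnm : ¬ ∃ i, gG i = v.1 ∧ gH i = b' :=
            fun ⟨i, hi1, _⟩ => hu (hi1 ▸ hgGmem i)
          have hval := theF_zero BG BH gG gH (p := (v.1, b')) hb'B hnm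
          refine ⟨(v.1, b'), SimpleGraph.boxProd_adj.2 (Or.inr ⟨hb', rfl⟩), ?_⟩
          rw [hfdef, hval]
          exact Finset.mem_singleton_self _
        · obtain ⟨u', hu'⟩ := hG v.1
          have hu'B : u' ∈ BG := (hcovG v.1 u' hu').resolve_left hu
          have hnm : ¬ ∃ i, gG i = u' ∧ gH i = v.2 :=
            fun ⟨i, _, hi2⟩ => hb (hi2 ▸ hgHmem i)
          have hval := theF_one BG BH gG gH (p := (u', v.2)) hu'B hb hnm
          refine ⟨(u', v.2), SimpleGraph.boxProd_adj.2 (Or.inl ⟨hu', rfl⟩), ?_⟩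
          rw [hfdef, hval]
          exact Finset.mem_singleton_self _
      · fin_cases c
        · obtain ⟨u', hu'⟩ := hG v.1
          have hnm : ¬ ∃ j, gG j = u' ∧ gH j = v.2 := by
            rintro ⟨j, hj1, hj2⟩
            have hji : j = i := hgHinj (hj2.trans hhi.symm)
            have : v.1 = u' := by rw [← hgi, ← hj1, hji]
            exact hu'.ne this
          have hval := theF_zero BG BH gG gH (p := (u', v.2)) (hhi ▸ hgHmem i) hnm
          refine ⟨(u', v.2), SimpleGraph.boxProd_adj.2 (Or.inl ⟨hu', rfl⟩), ?_⟩
          rw [hfdef, hval]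
          exact Finset.mem_singleton_self _
        · obtain ⟨b', hb', hb'n⟩ := hminH v.2 (hhi ▸ hgHmem i)
          have hnm : ¬ ∃ j, gG j = v.1 ∧ gH j = b' :=
            fun ⟨j, _, hj2⟩ => hb'n (hj2 ▸ hgHmem j)
          have hval := theF_one BG BH gG gH (p := (v.1, b')) (hgi ▸ hgGmem i) hb'n hnm
          refine ⟨(v.1, b'), SimpleGraph.boxProd_adj.2 (Or.inr ⟨hb', rfl⟩), ?_⟩
          rw [hfdef, hval]
          exact Finset.mem_singleton_self _
    · intro p q hp hq hadj
      rw [hfdef, theF_eq_empty_iff] at hp hq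
      rw [SimpleGraph.boxProd_adj] at hadj
      rcases hp with ⟨hp1, hp2⟩ | ⟨i, hi1, hi2⟩ <;>
        rcases hq with ⟨hq1, hq2⟩ | ⟨j, hj1, hj2⟩
      · rcases hadj with ⟨ha, -⟩ | ⟨ha, -⟩
        · rcases hcovG _ _ ha with h | h
          · exact hp1 h
          · exact hq1 h
        · rcases hcovH _ _ ha with h | h
          · exact hp2 h
          · exact hq2 h
      · rcases hadj with ⟨-, he⟩ | ⟨-, he⟩
        · exact hp2 (he ▸ hj2 ▸ hgHmem j)
        · exact hp1 (he ▸ hj1 ▸ hgGmem j)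
      · rcases hadj with ⟨-, he⟩ | ⟨-, he⟩
        · exact hq2 (he ▸ hi2 ▸ hgHmem i)
        · exact hq1 (he ▸ hi1 ▸ hgGmem i)
      · rcases hadj with ⟨ha, he⟩ | ⟨ha, he⟩
        · have hji : i = j := hgHinj (hi2.trans (he.trans hj2.symm))
          have : p.1 = q.1 := by rw [← hi1, ← hj1, hji]
          exact ha.ne this
        · have hji : i = j := hgGinj (hi1.trans (he.trans hj1.symm))
          have : p.2 = q.2 := by rw [← hi2, ← hj2, hji]
          exact ha.ne this
  have hle : oir2 (G □ H) ≤ ∑ v : α × β, (f v).card :=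
    Nat.sInf_le ⟨f, hOI, rfl⟩
  -- compute the weight
  set M : Finset (α × β) := Finset.image (fun i => (gG i, gH i)) Finset.univ with hMdef
  have hMsub : M ⊆ Finset.univ ×ˢ BH := by
    intro p hp
    rw [hMdef, Finset.mem_image] at hp
    obtain ⟨i, -, rfl⟩ := hp
    exact Finset.mem_product.2 ⟨Finset.mem_univ _, hgHmem i⟩
  have hMcard : M.card = m := by
    rw [hMdef, Finset.card_image_of_injective _ (fun i j hij => hgHinj (congrArg Prod.snd hij)),
      Finset.card_univ, Fintype.card_fin]
  have hsum : ∑ v : α × β, (f v).card =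
      (((Finset.univ : Finset α) ×ˢ BH).card - M.card) + (BG ×ˢ BHᶜ).card := by
    have h0 : ∑ v : α × β, (f v).card =
        ∑ v : α × β, ((if v.2 ∈ BH ∧ ¬ ∃ i, gG i = v.1 ∧ gH i = v.2 then 1 else 0) +
          (if v.1 ∈ BG ∧ v.2 ∉ BH then 1 else 0)) :=
      Finset.sum_congr rfl fun p _ => theF_card BG BH gG gH hgHmem p
    have e1 : ∑ v : α × β, (if v.2 ∈ BH ∧ ¬ ∃ i, gG i = v.1 ∧ gH i = v.2 then 1 else 0)
        = (Finset.univ.filter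
            (fun v : α × β => v.2 ∈ BH ∧ ¬ ∃ i, gG i = v.1 ∧ gH i = v.2)).card :=
      (Finset.card_filter _ _).symm
    have e2 : ∑ v : α × β, (if v.1 ∈ BG ∧ v.2 ∉ BH then 1 else 0)
        = (Finset.univ.filter (fun v : α × β => v.1 ∈ BG ∧ v.2 ∉ BH)).card :=
      (Finset.card_filter _ _).symm
    rw [h0, Finset.sum_add_distrib, e1, e2]
    congr 1
    · rw [← Finset.card_sdiff_of_subset hMsub]
      congr 1
      ext ⟨u, v⟩
      simp only [Finset.mem_filter, Finset.mem_univ, true_and, Finset.mem_sdiff,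
        Finset.mem_product, hMdef, Finset.mem_image, Prod.mk.injEq]
    · congr 1
      ext ⟨u, v⟩
      simp only [Finset.mem_filter, Finset.mem_univ, true_and, Finset.mem_product,
        Finset.mem_compl]
  rw [hsum, Finset.card_product, Finset.card_product, Finset.card_univ, Finset.card_compl,
    hMcard] at hle
  -- the independence-number bound
  have halpha : Fintype.card α - BG.card ≤ alphaNum G := by
    have hind : ∀ u ∈ BGᶜ, ∀ w ∈ BGᶜ, ¬ G.Adj u w := by
      intro u hu w hw hadj
      rcases hcovG u w hadj with h | h
      · exact Finset.mem_compl.1 hu h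
      · exact Finset.mem_compl.1 hw h
    have := le_alphaNum G BGᶜ hind
    rwa [Finset.card_compl] at this
  -- wrap up in ℤ
  have hmle : m ≤ Fintype.card α * BH.card := by
    have := Finset.card_le_card hMsub
    rw [hMcard, Finset.card_product, Finset.card_univ] at this
    exact this
  have hBHle : BH.card ≤ Fintype.card β := BH.card_le_univ
  have hBGle : BG.card ≤ Fintype.card α := BG.card_le_univ
  have hle' : (oir2 (G □ H) : ℤ) ≤
      ((Fintype.card α : ℤ) * BH.card - m) + (BG.card : ℤ) * ((Fintype.card β : ℤ) - BH.card) := by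
    calc (oir2 (G □ H) : ℤ) ≤
        ((Fintype.card α * BH.card - m) + BG.card * (Fintype.card β - BH.card) : ℕ) := by
          exact_mod_cast hle
      _ = _ := by push_cast [Nat.cast_sub hmle, Nat.cast_sub hBHle]; ring
  have halpha' : (Fintype.card α : ℤ) - BG.card ≤ alphaNum G := by
    have h := halpha
    zify [hBGle] at h
    linarith
  have hmin : (m : ℤ) = min (BG.card : ℤ) (BH.card : ℤ) := by
    rw [hmdef]
    exact Nat.cast_min _ _
  have hmul : ((Fintype.card α : ℤ) - BG.card) * BH.card ≤ (alphaNum G : ℤ) * BH.card :=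
    mul_le_mul_of_nonneg_right halpha' (by positivity)
  rw [← hBGcard, ← hBHcard, ← hmin]
  nlinarith [hle', hmul]
end

section
/- Let G be a graph of order n with at least one edge, and let H be a graph with root vertex v. Suppose there exists an OI2RD function of H of minimum weight γ_oir2(H) assigning a nonempty set to v, but every such minimum-weight OI2RD function g with g(v) ≠ ∅ assigns ∅ to some neighbor of v in H. Then γ_oir2(G ∘_v H) = n·γ_oir2(H). -/
/-- The rooted product `G ∘ᵥ H` with root `v : V(H)`: one copy of `H` for each
vertex of `G`, with the roots of the copies joined according to `G`. -/
def rootedProd {α β : Type*} (G : SimpleGraph α) (H : SimpleGraph β) (v : β) :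
    SimpleGraph (α × β) where
  Adj x y := (x.1 = y.1 ∧ H.Adj x.2 y.2) ∨ (x.2 = v ∧ y.2 = v ∧ G.Adj x.1 y.1)
  symm := by
    constructor
    rintro x y (⟨h1, h2⟩ | ⟨h1, h2, h3⟩)
    · exact Or.inl ⟨h1.symm, h2.symm⟩
    · exact Or.inr ⟨h2, h1, h3.symm⟩
  loopless := by
    constructor
    rintro x (⟨-, h⟩ | ⟨-, -, h⟩)
    · exact H.irrefl h
    · exact G.irrefl h

/-- `oir2` is a lower bound for the weight of any OI2RD function. -/
lemma oir2_le_weight {V : Type*} [Fintype V] (G : SimpleGraph V)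
    (f : V → Finset (Fin 2)) (hf : IsOI2RD G f) :
    oir2 G ≤ ∑ u, (f u).card :=
  Nat.sInf_le ⟨f, hf, rfl⟩

set_option maxHeartbeats 1000000 in
theorem oir2_rootedProd_eq
    {α β : Type*} [Fintype α] [Fintype β]
    (G : SimpleGraph α) (H : SimpleGraph β) (v : β)
    (hG : ∃ u w, G.Adj u w)
    (hex : ∃ g : β → Finset (Fin 2),
      IsOI2RD H g ∧ (∑ u, (g u).card) = oir2 H ∧ g v ≠ ∅)
    (hall : ∀ g : β → Finset (Fin 2),
      IsOI2RD H g → (∑ u, (g u).card) = oir2 H → g v ≠ ∅ →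
        ∃ u, H.Adj v u ∧ g u = ∅) :
    oir2 (rootedProd G H v) = Fintype.card α * oir2 H := by
  classical
  obtain ⟨g, hg, hgsum, hgv⟩ := hex
  -- The product of g over all copies is an OI2RD function of the rooted product.
  set F : α × β → Finset (Fin 2) := fun x => g x.2 with hFdef
  have hF : IsOI2RD (rootedProd G H v) F := by
    constructor
    · intro x hx c
      obtain ⟨u, hu, hcu⟩ := hg.1 x.2 hx c
      exact ⟨(x.1, u), Or.inl ⟨rfl, hu⟩, hcu⟩
    · rintro x y hx hy (⟨h1, h2⟩ | ⟨h1, h2, h3⟩)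
      · exact hg.2 x.2 y.2 hx hy h2
      · exact hgv (h1 ▸ hx)
  have hFsum : ∑ x : α × β, (F x).card = Fintype.card α * oir2 H := by
    calc ∑ x : α × β, (F x).card = ∑ a : α, ∑ b : β, (g b).card :=
          Fintype.sum_prod_type _
      _ = ∑ _a : α, oir2 H := by simp [hgsum]
      _ = Fintype.card α * oir2 H := by
          simp [Finset.sum_const, Finset.card_univ]
  have hmem : Fintype.card α * oir2 H ∈
      {w | ∃ f : (α × β) → Finset (Fin 2),
        IsOI2RD (rootedProd G H v) f ∧ w = ∑ x, (f x).card} :=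
    ⟨F, hF, hFsum.symm⟩
  -- The infimum is attained
  obtain ⟨f, hf, hw⟩ := Nat.sInf_mem (⟨_, hmem⟩ :
    Set.Nonempty {w | ∃ f : (α × β) → Finset (Fin 2),
      IsOI2RD (rootedProd G H v) f ∧ w = ∑ x, (f x).card})
  refine le_antisymm (Nat.sInf_le hmem) ?_
  rw [show oir2 (rootedProd G H v) = ∑ x, (f x).card from hw]
  -- Each copy has weight at least oir2 H.
  have key : ∀ a : α, oir2 H ≤ ∑ b : β, (f (a, b)).card := by
    intro a
    by_cases hav : f (a, v) = ∅
    · -- the root of the copy is empty: patch it with {0}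
      set ga : β → Finset (Fin 2) := fun b => if b = v then {0} else f (a, b)
        with hgadef
      have hgav : ga v = {0} := by simp [hgadef]
      have hga : IsOI2RD H ga := by
        constructor
        · intro b hb c
          have hbv : b ≠ v := by
            intro h; rw [h, hgav] at hb; simp at hb
          have hfb : f (a, b) = ∅ := by
            simpa [hgadef, hbv] using hb
          obtain ⟨u, hu, hcu⟩ := hf.1 (a, b) hfb c
          rcases hu with ⟨h1, h2⟩ | ⟨h1, _, _⟩
          · have huv : u.2 ≠ v := by
              intro h
              have : f (a, u.2) = ∅ := h ▸ hav
              rw [show u = (a, u.2) from Prod.ext h1.symm rfl] at hcu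
              simp [this] at hcu
            refine ⟨u.2, h2, ?_⟩
            rw [show u = (a, u.2) from Prod.ext h1.symm rfl] at hcu
            simpa [hgadef, huv] using hcu
          · exact absurd h1 hbv
        · intro b b' hb hb' hadj
          have hbv : b ≠ v := by intro h; rw [h, hgav] at hb; simp at hb
          have hbv' : b' ≠ v := by intro h; rw [h, hgav] at hb'; simp at hb'
          exact hf.2 (a, b) (a, b') (by simpa [hgadef, hbv] using hb)
            (by simpa [hgadef, hbv'] using hb') (Or.inl ⟨rfl, hadj⟩)
      have hsum : ∑ b : β, (ga b).card = (∑ b : β, (f (a, b)).card) + 1 := by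
        have : ∀ b : β, (ga b).card = (f (a, b)).card + (if b = v then 1 else 0) := by
          intro b
          by_cases h : b = v
          · subst h; simp [hgadef, hav]
          · simp [hgadef, h]
        rw [Finset.sum_congr rfl (fun b _ => this b), Finset.sum_add_distrib]
        simp
      have hle : oir2 H ≤ (∑ b : β, (f (a, b)).card) + 1 := by
        rw [← hsum]; exact oir2_le_weight H ga hga
      by_contra hcon
      push_neg at hcon
      have heq : ∑ b : β, (ga b).card = oir2 H :=
        le_antisymm (by rw [hsum]; exact hcon) (oir2_le_weight H ga hga)
      obtain ⟨u, hu, hgau⟩ := hall ga hga heq (by rw [hgav]; simp)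
      have huv : u ≠ v := by intro h; rw [h, hgav] at hgau; simp at hgau
      have hfu : f (a, u) = ∅ := by simpa [hgadef, huv] using hgau
      exact hf.2 (a, v) (a, u) hav hfu (Or.inl ⟨rfl, hu⟩)
    · -- the root is nonempty: restriction to the copy is OI2RD
      have hfa : IsOI2RD H (fun b => f (a, b)) := by
        constructor
        · intro b hb c
          have hbv : b ≠ v := fun h => hav (h ▸ hb)
          obtain ⟨u, hu, hcu⟩ := hf.1 (a, b) hb c
          rcases hu with ⟨h1, h2⟩ | ⟨h1, _, _⟩
          · refine ⟨u.2, h2, ?_⟩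
            rw [show u = (a, u.2) from Prod.ext h1.symm rfl] at hcu
            exact hcu
          · exact absurd h1 hbv
        · intro b b' hb hb' hadj
          exact hf.2 (a, b) (a, b') hb hb' (Or.inl ⟨rfl, hadj⟩)
      exact oir2_le_weight H _ hfa
  calc Fintype.card α * oir2 H = ∑ _a : α, oir2 H := by
        simp [Finset.sum_const, Finset.card_univ]
    _ ≤ ∑ a : α, ∑ b : β, (f (a, b)).card := Finset.sum_le_sum fun a _ => key a
    _ = ∑ x : α × β, (f x).card := (Fintype.sum_prod_type (fun x : α × β => (f x).card)).symm
end

section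
/- If G is a graph of order n with no isolated vertices, then the corona product of G with the one-vertex graph K_1 satisfies γ_oir2(G ⊙ K_1) = n + β(G), where β(G) is the vertex cover number of G. -/
/-- The corona `G ⊙ H`: the vertex `(a, none)` plays the role of the vertex `a`
of `G`, and `(a, some h)` is the vertex `h` of the copy `H_a` of `H`; each
vertex `a` of `G` is joined to every vertex of `H_a`. -/
def corona {α β : Type*} (G : SimpleGraph α) (H : SimpleGraph β) :
    SimpleGraph (α × Option β) where
  Adj x y :=
    (x.2 = none ∧ y.2 = none ∧ G.Adj x.1 y.1) ∨
    (x.1 = y.1 ∧ ∃ h h', x.2 = some h ∧ y.2 = some h' ∧ H.Adj h h') ∨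
    (x.1 = y.1 ∧ x.2 = none ∧ ∃ h, y.2 = some h) ∨
    (x.1 = y.1 ∧ y.2 = none ∧ ∃ h, x.2 = some h)
  symm := by
    constructor
    rintro x y (⟨h1, h2, h3⟩ | ⟨h1, h, h', hx, hy, hadj⟩ | ⟨h1, h2, h3⟩ | ⟨h1, h2, h3⟩)
    · exact Or.inl ⟨h2, h1, h3.symm⟩
    · exact Or.inr (Or.inl ⟨h1.symm, h', h, hy, hx, hadj.symm⟩)
    · exact Or.inr (Or.inr (Or.inr ⟨h1.symm, h2, h3⟩))
    · exact Or.inr (Or.inr (Or.inl ⟨h1.symm, h2, h3⟩))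
  loopless := by
    constructor
    rintro x (⟨-, -, h⟩ | ⟨-, h, h', hx, hy, hadj⟩ | ⟨-, h2, h, h3⟩ | ⟨-, h2, h, h3⟩)
    · exact G.irrefl h
    · rw [hx] at hy
      injection hy with e
      rw [e] at hadj
      exact H.irrefl hadj
    · rw [h2] at h3
      exact Option.some_ne_none _ h3.symm
    · rw [h2] at h3
      exact Option.some_ne_none _ h3.symm

section Aux
variable {α : Type*} (G : SimpleGraph α)

lemma corona_adj_leaf (a : α) (i : Fin 1) :
    (corona G (⊥ : SimpleGraph (Fin 1))).Adj (a, some i) (a, none) :=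
  Or.inr (Or.inr (Or.inr ⟨rfl, rfl, i, rfl⟩))

lemma corona_adj_leaf' (a : α) (i : Fin 1) :
    (corona G (⊥ : SimpleGraph (Fin 1))).Adj (a, none) (a, some i) :=
  Or.inr (Or.inr (Or.inl ⟨rfl, rfl, i, rfl⟩))

lemma corona_adj_base {a b : α} (h : G.Adj a b) :
    (corona G (⊥ : SimpleGraph (Fin 1))).Adj (a, none) (b, none) :=
  Or.inl ⟨rfl, rfl, h⟩

lemma corona_leaf_adj {a : α} {i : Fin 1} {u : α × Option (Fin 1)}
    (h : (corona G (⊥ : SimpleGraph (Fin 1))).Adj (a, some i) u) : u = (a, none) := by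
  obtain ⟨b, o⟩ := u
  rcases h with ⟨h1, _, _⟩ | ⟨_, _, _, _, _, hadj⟩ | ⟨_, h2, _⟩ | ⟨h1, h2, _⟩
  · exact absurd h1 (by simp)
  · exact absurd hadj (by simp)
  · exact absurd h2 (by simp)
  · simp only at h1 h2; rw [h1, h2]

lemma sum_prod_option {M : Type*} [AddCommMonoid M] [Fintype α]
    (g : α × Option (Fin 1) → M) :
    ∑ v, g v = ∑ a, (g (a, none) + g (a, some 0)) := by
  rw [Fintype.sum_prod_type]
  refine Finset.sum_congr rfl fun a _ => ?_
  rw [Fintype.sum_option, Fin.sum_univ_one]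

end Aux

/-- If `G` has order `n` and no isolated vertices, then
`γ_oir2(G ⊙ K_1) = n + β(G)`. -/
theorem oir2_corona_K1
    {α : Type*} [Fintype α] (G : SimpleGraph α)
    (hG : ∀ v, ∃ u, G.Adj v u) :
    oir2 (corona G (⊥ : SimpleGraph (Fin 1))) = Fintype.card α + betaNum G := by
  classical
  set GH := corona G (⊥ : SimpleGraph (Fin 1)) with hGH
  -- obtain a minimum vertex cover
  have hbne : {k | ∃ s : Finset α, (∀ u w, G.Adj u w → u ∈ s ∨ w ∈ s) ∧ s.card = k}.Nonempty :=
    ⟨(Finset.univ : Finset α).card, Finset.univ, fun u w _ => Or.inl (Finset.mem_univ u), rfl⟩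
  obtain ⟨s, hcov, hcard⟩ := Nat.sInf_mem hbne
  -- construct an OI2RD function of weight n + β
  set f : α × Option (Fin 1) → Finset (Fin 2) := fun v =>
    match v.2 with
    | none => if v.1 ∈ s then {0, 1} else ∅
    | some _ => if v.1 ∈ s then ∅ else {0} with hf
  have hfnone : ∀ a, f (a, none) = if a ∈ s then {0, 1} else ∅ := fun a => rfl
  have hfsome : ∀ a (i : Fin 1), f (a, some i) = if a ∈ s then ∅ else {0} := fun a i => rfl
  have hfOI : IsOI2RD GH f := by
    constructor
    · rintro ⟨a, o⟩ hv c
      match o with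
      | none =>
        rw [hfnone] at hv
        by_cases ha : a ∈ s
        · simp [ha] at hv
        · obtain ⟨b, hab⟩ := hG a
          have hb : b ∈ s := (hcov a b hab).resolve_left ha
          refine ⟨(b, none), corona_adj_base G hab, ?_⟩
          rw [hfnone, if_pos hb]
          fin_cases c <;> simp
      | some i =>
        rw [hfsome] at hv
        by_cases ha : a ∈ s
        · refine ⟨(a, none), corona_adj_leaf G a i, ?_⟩
          rw [hfnone, if_pos ha]
          fin_cases c <;> simp
        · simp [ha] at hv
    · rintro ⟨a, o⟩ ⟨b, o'⟩ hu hw hadj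
      match o, o' with
      | none, none =>
        rw [hfnone] at hu hw
        have ha : a ∉ s := by by_contra h; simp [h] at hu
        have hb : b ∉ s := by by_contra h; simp [h] at hw
        rcases hadj with ⟨_, _, h3⟩ | ⟨_, _, _, hx, _, _⟩ | ⟨_, _, h, h3⟩ | ⟨_, _, h, h3⟩
        · exact (hcov a b h3).elim ha hb
        · exact absurd hx (by simp)
        · exact absurd h3 (by simp)
        · exact absurd h3 (by simp)
      | none, some j =>
        rw [hfnone] at hu; rw [hfsome] at hw
        have ha : a ∉ s := by by_contra h; simp [h] at hu
        have hb : b ∈ s := by by_contra h; simp [h] at hw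
        rcases hadj with ⟨_, h2, _⟩ | ⟨_, _, _, hx, _, _⟩ | ⟨h1, _, _⟩ | ⟨_, h2, _⟩
        · exact absurd h2 (by simp)
        · exact absurd hx (by simp)
        · simp only at h1; exact ha (h1 ▸ hb)
        · exact absurd h2 (by simp)
      | some j, none =>
        rw [hfsome] at hu; rw [hfnone] at hw
        have ha : a ∈ s := by by_contra h; simp [h] at hu
        have hb : b ∉ s := by by_contra h; simp [h] at hw
        rcases hadj with ⟨h1, _, _⟩ | ⟨_, _, _, _, hy, _⟩ | ⟨_, h2, _⟩ | ⟨h1, _, _⟩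
        · exact absurd h1 (by simp)
        · exact absurd hy (by simp)
        · exact absurd h2 (by simp)
        · simp only at h1; exact hb (h1 ▸ ha)
      | some i, some j =>
        rcases hadj with ⟨h1, _, _⟩ | ⟨_, _, _, _, _, hadj'⟩ | ⟨_, h2, _⟩ | ⟨_, h2, _⟩
        · exact absurd h1 (by simp)
        · exact absurd hadj' (by simp)
        · exact absurd h2 (by simp)
        · exact absurd h2 (by simp)
  have hweight : ∑ v, (f v).card = Fintype.card α + betaNum G := by
    rw [sum_prod_option]
    have : ∀ a : α, (f (a, none)).card + (f (a, some 0)).card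
        = 1 + (if a ∈ s then 1 else 0) := by
      intro a
      rw [hfnone, hfsome]
      by_cases ha : a ∈ s <;> simp [ha]
    rw [Finset.sum_congr rfl fun a _ => this a, Finset.sum_add_distrib,
      Finset.sum_const, smul_eq_mul, mul_one, Finset.sum_ite_mem, Finset.univ_inter,
      Finset.sum_const, smul_eq_mul, mul_one, Finset.card_univ, hcard]
    rfl
  -- upper bound membership
  have hmem : (Fintype.card α + betaNum G) ∈
      {w | ∃ f : α × Option (Fin 1) → Finset (Fin 2), IsOI2RD GH f ∧ w = ∑ v, (f v).card} :=
    ⟨f, hfOI, hweight.symm⟩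
  -- lower bound: every OI2RD function has weight ≥ n + β
  have hlow : ∀ g : α × Option (Fin 1) → Finset (Fin 2), IsOI2RD GH g →
      Fintype.card α + betaNum G ≤ ∑ v, (g v).card := by
    intro g ⟨hdom, hind⟩
    have hpair1 : ∀ a : α, 1 ≤ (g (a, none)).card + (g (a, some 0)).card := by
      intro a
      by_contra h
      push_neg at h
      interval_cases h' : (g (a, none)).card + (g (a, some 0)).card
      have h1 : g (a, none) = ∅ := Finset.card_eq_zero.mp (Nat.le_zero.mp (by omega))
      have h2 : g (a, some 0) = ∅ := Finset.card_eq_zero.mp (Nat.le_zero.mp (by omega))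
      exact hind _ _ h1 h2 (corona_adj_leaf' G a 0)
    have hkey : ∀ a : α, (g (a, none)).card + (g (a, some 0)).card ≤ 1 →
        g (a, none) = ∅ := by
      intro a hle
      by_contra hne
      have h2 : g (a, some 0) = ∅ := by
        have : (g (a, none)).card ≥ 1 := Finset.card_pos.mpr (Finset.nonempty_iff_ne_empty.mpr hne)
        exact Finset.card_eq_zero.mp (by omega)
      -- then both colors must be in g (a, none), so card ≥ 2, contradiction
      obtain ⟨u0, hadj0, hc0⟩ := hdom (a, some 0) h2 0
      obtain ⟨u1, hadj1, hc1⟩ := hdom (a, some 0) h2 1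
      rw [corona_leaf_adj G hadj0] at hc0
      rw [corona_leaf_adj G hadj1] at hc1
      have : 1 < (g (a, none)).card := Finset.one_lt_card.mpr ⟨0, hc0, 1, hc1, by decide⟩
      omega
    set T : Finset α := Finset.univ.filter
      (fun a => 2 ≤ (g (a, none)).card + (g (a, some 0)).card) with hT
    have hTcov : ∀ u w, G.Adj u w → u ∈ T ∨ w ∈ T := by
      intro u w huw
      by_contra h
      push_neg at h
      obtain ⟨hu, hw⟩ := h
      simp only [hT, Finset.mem_filter, Finset.mem_univ, true_and, not_le] at hu hw
      have h1 := hkey u (by omega)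
      have h2 := hkey w (by omega)
      exact hind _ _ h1 h2 (corona_adj_base G huw)
    have hbT : betaNum G ≤ T.card := Nat.sInf_le ⟨T, hTcov, rfl⟩
    calc Fintype.card α + betaNum G ≤ Fintype.card α + T.card := by omega
    _ = ∑ a : α, (1 + if a ∈ T then 1 else 0) := by
        rw [Finset.sum_add_distrib, Finset.sum_const, smul_eq_mul, mul_one,
          Finset.sum_ite_mem, Finset.univ_inter, Finset.sum_const, smul_eq_mul, mul_one,
          Finset.card_univ]
    _ ≤ ∑ a : α, ((g (a, none)).card + (g (a, some 0)).card) := by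
        refine Finset.sum_le_sum fun a _ => ?_
        by_cases ha : a ∈ T
        · simp only [ha, if_pos]
          simpa [hT, Finset.mem_filter] using ha
        · simp only [ha, if_neg, not_false_iff]
          simpa using hpair1 a
    _ = ∑ v, (g v).card := (sum_prod_option (fun v => (g v).card)).symm
  -- conclude
  have h1 : oir2 GH ≤ Fintype.card α + betaNum G := Nat.sInf_le hmem
  have h2 : Fintype.card α + betaNum G ≤ oir2 GH := by
    obtain ⟨g, hg, hw⟩ := Nat.sInf_mem ⟨_, hmem⟩
    rw [oir2, hw]
    exact hlow g hg
  omega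
end
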